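/- Let θ be a CPWL function and consider the composite optimization setting with v̄ ∈ ∂θ(z̄). Suppose that ⟨∇²ₓₓL(x̄,v̄)u, u⟩ ≥ 0 for every u with ∇Φ(x̄)u ∈ 𝒦(z̄,v̄), and that ū satisfies ∇Φ(x̄)ū ∈ 𝒦(z̄,v̄) and ⟨∇²ₓₓL(x̄,v̄)ū, ū⟩ = 0. Then there exists η̄ ∈ ℝ^m with ⟨η̄, w⟩ ≤ 0 for all w ∈ 𝒦(z̄,v̄), ⟨η̄, ∇Φ(x̄)ū⟩ = 0, and ∇²ₓₓL(x̄,v̄)ū + ∇Φ(x̄)*η̄ = 0. -/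

import Mathlib

open Filter Topology Set RealInnerProductSpace

noncomputable section

abbrev Ev (k : ℕ) := EuclideanSpace ℝ (Fin k)

/-- The Bouligand–Severi tangent cone to a set `s` at `x`. -/
def tcone {E : Type*} [NormedAddCommGroup E] [NormedSpace ℝ E] (s : Set E) (x : E) : Set E :=
  {w | ∃ (z : ℕ → E) (c : ℕ → ℝ), (∀ k, z k ∈ s) ∧ (∀ k, 0 ≤ c k) ∧
      Tendsto z atTop (𝓝 x) ∧ Tendsto (fun k => c k • (z k - x)) atTop (𝓝 w)}

/-- The data of a convex piecewise linear (CPWL) extended-real-valued function on `ℝ^m`: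
`θ(z) = max_i (⟨a i, z⟩ - al i)` on the polyhedron `dom θ = {z | ⟨d i, z⟩ ≤ be i ∀ i}`,
and `θ(z) = +∞` outside of it. -/
structure CPWL (m : ℕ) where
  l : ℕ
  p : ℕ
  hl : 0 < l
  a : Fin l → Ev m
  al : Fin l → ℝ
  d : Fin p → Ev m
  be : Fin p → ℝ
  dom_nonempty : ∃ z : Ev m, ∀ i, ⟪d i, z⟫ ≤ be i

namespace CPWL

variable {m : ℕ} (θ : CPWL m)

/-- The (polyhedral) domain of the CPWL function. -/
def dom : Set (Ev m) := {z | ∀ i, ⟪θ.d i, z⟫ ≤ θ.be i}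

/-- The real value `max_i (⟨a i, z⟩ - al i)` of the CPWL function (meaningful on its domain). -/
def val (z : Ev m) : ℝ := ⨆ i : Fin θ.l, (⟪θ.a i, z⟫ - θ.al i)

/-- The CPWL function as an extended-real-valued function. -/
def eval (z : Ev m) : EReal :=
  @ite _ (z ∈ θ.dom) (Classical.propDecidable _) ((θ.val z : ℝ) : EReal) ⊤

/-- The subdifferential (of convex analysis) of the CPWL function. -/
def subdiff (z : Ev m) : Set (Ev m) :=
  {v | z ∈ θ.dom ∧ ∀ z' ∈ θ.dom, ⟪v, z' - z⟫ ≤ θ.val z' - θ.val z}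

/-- Active indices `K(z)` of the max-representation. -/
def Kact (z : Ev m) : Set (Fin θ.l) := {i | θ.val z = ⟪θ.a i, z⟫ - θ.al i}

/-- Active indices `I(z)` of the domain constraints. -/
def Iact (z : Ev m) : Set (Fin θ.p) := {i | ⟪θ.d i, z⟫ = θ.be i}

/-- The critical cone `𝒦(z̄,v̄) = {w ∈ T(z̄; dom θ) : ⟨v̄,w⟩ = θ′(z̄;w)}`. -/
def crit (zb vb : Ev m) : Set (Ev m) :=
  {w | w ∈ tcone θ.dom zb ∧
    Tendsto (fun t : ℝ => (θ.val (zb + t • w) - θ.val zb) / t) (𝓝[>] (0 : ℝ))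
      (𝓝 ⟪vb, w⟫)}

/-- The graph of the subdifferential mapping. -/
def gph : Set (Ev m × Ev m) := {zv | zv.2 ∈ θ.subdiff zv.1}

/-- The graphical derivative `(D∂θ)(z̄,v̄)(u)`. -/
def Dsub (zb vb u : Ev m) : Set (Ev m) := {w | (u, w) ∈ tcone θ.gph (zb, vb)}

/-- The regular coderivative `(D̂*∂θ)(z̄,v̄)(u)`. -/
def Dhat (zb vb u : Ev m) : Set (Ev m) :=
  {w | ∀ h ∈ tcone θ.gph (zb, vb), ⟪w, h.1⟫ - ⟪u, h.2⟫ ≤ 0}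

end CPWL

section VarSys

variable {n m : ℕ}

/-- The adjoint `∇Φ(x)*` of the Jacobian of `Φ` at `x`. -/
def adjD (Φ : Ev n → Ev m) (x : Ev n) : Ev m →L[ℝ] Ev n :=
  ContinuousLinearMap.adjoint (fderiv ℝ Φ x)

/-- `Ψ(x,v) = f(x) + ∇Φ(x)* v`. -/
def Psi (f : Ev n → Ev n) (Φ : Ev n → Ev m) (x : Ev n) (v : Ev m) : Ev n :=
  f x + adjD Φ x v

/-- The partial Jacobian `∇ₓΨ(x̄,v̄)`. -/
def gradxPsi (f : Ev n → Ev n) (Φ : Ev n → Ev m) (xb : Ev n) (vb : Ev m) :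
    Ev n →L[ℝ] Ev n :=
  fderiv ℝ (fun x => Psi f Φ x vb) xb

/-- The Lagrange multiplier set `Λ(x̄)` of the variational system. -/
def Lam (f : Ev n → Ev n) (Φ : Ev n → Ev m) (θ : CPWL m) (xb : Ev n) : Set (Ev m) :=
  {v | Psi f Φ xb v = 0 ∧ v ∈ θ.subdiff (Φ xb)}

/-- `v̄` is a critical multiplier for the variational system. -/
def IsCritical (f : Ev n → Ev n) (Φ : Ev n → Ev m) (θ : CPWL m) (xb : Ev n) (vb : Ev m) :
    Prop :=
  ∃ ξ : Ev n, ξ ≠ 0 ∧ ∃ w ∈ θ.Dsub (Φ xb) vb (fderiv ℝ Φ xb ξ),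
    gradxPsi f Φ xb vb ξ + adjD Φ xb w = 0

/-- The solution map of the canonically perturbed variational system. -/
def Smap (f : Ev n → Ev n) (Φ : Ev n → Ev m) (θ : CPWL m) (p₁ : Ev n) (p₂ : Ev m) :
    Set (Ev n × Ev m) :=
  {xv | Psi f Φ xv.1 xv.2 = p₁ ∧ xv.2 ∈ θ.subdiff (Φ xv.1 + p₂)}

end VarSys

section General

variable {n m : ℕ}

/-- The subdifferential of a general extended-real-valued function. -/
def subdiffE (θ : Ev m → EReal) (z : Ev m) : Set (Ev m) :=
  {v | ∀ z', ((⟪v, z' - z⟫ : ℝ) : EReal) ≤ θ z' - θ z}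

/-- The graph of the subdifferential of a general extended-real-valued function. -/
def gphE (θ : Ev m → EReal) : Set (Ev m × Ev m) := {zv | zv.2 ∈ subdiffE θ zv.1}

/-- The graphical derivative of the subdifferential, general case. -/
def DsubE (θ : Ev m → EReal) (zb vb u : Ev m) : Set (Ev m) :=
  {w | (u, w) ∈ tcone (gphE θ) (zb, vb)}

/-- The Lagrange multiplier set, general case. -/
def LamE (f : Ev n → Ev n) (Φ : Ev n → Ev m) (θ : Ev m → EReal) (xb : Ev n) :
    Set (Ev m) :=
  {v | Psi f Φ xb v = 0 ∧ v ∈ subdiffE θ (Φ xb)}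

/-- The solution map of the canonically perturbed variational system, general case. -/
def SmapE (f : Ev n → Ev n) (Φ : Ev n → Ev m) (θ : Ev m → EReal) (p₁ : Ev n)
    (p₂ : Ev m) : Set (Ev n × Ev m) :=
  {xv | Psi f Φ xv.1 xv.2 = p₁ ∧ xv.2 ∈ subdiffE θ (Φ xv.1 + p₂)}

end General

section Composite

variable {n m : ℕ}

/-- The gradient `∇ₓL(·,v)` of the Lagrangian `L(x,v) = φ₀(x) + ⟨Φ(x),v⟩`. -/
def gradL (φ₀ : Ev n → ℝ) (Φ : Ev n → Ev m) (v : Ev m) (x : Ev n) : Ev n :=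
  gradient (fun y => φ₀ y + ⟪Φ y, v⟫) x

/-- The Hessian `∇²ₓₓL(x̄,v)` as a linear operator. -/
def HessOp (φ₀ : Ev n → ℝ) (Φ : Ev n → Ev m) (v : Ev m) (xb : Ev n) : Ev n →L[ℝ] Ev n :=
  fderiv ℝ (gradL φ₀ Φ v) xb

/-- The Lagrange multiplier set `Λ_com(x̄)` of the composite optimization problem. -/
def LamCom (φ₀ : Ev n → ℝ) (Φ : Ev n → Ev m) (θ : CPWL m) (xb : Ev n) : Set (Ev m) :=
  {v | gradient φ₀ xb + adjD Φ xb v = 0 ∧ v ∈ θ.subdiff (Φ xb)}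

/-- Criticality of a multiplier in the composite optimization setting. -/
def IsCriticalCom (φ₀ : Ev n → ℝ) (Φ : Ev n → Ev m) (θ : CPWL m) (xb : Ev n) (v : Ev m) :
    Prop :=
  ∃ ξ : Ev n, ξ ≠ 0 ∧ ∃ w ∈ θ.Dsub (Φ xb) v (fderiv ℝ Φ xb ξ),
    HessOp φ₀ Φ v xb ξ + adjD Φ xb w = 0

/-- The solution map of the canonically perturbed KKT system of composite optimization. -/
def SKKT (φ₀ : Ev n → ℝ) (Φ : Ev n → Ev m) (θ : CPWL m) (p₁ : Ev n) (p₂ : Ev m) :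
    Set (Ev n × Ev m) :=
  {xv | gradient φ₀ xv.1 + adjD Φ xv.1 xv.2 = p₁ ∧ xv.2 ∈ θ.subdiff (Φ xv.1 + p₂)}

/-- `x̄` is a local minimizer of `φ₀ + θ∘Φ`. -/
def LocalMin (φ₀ : Ev n → ℝ) (Φ : Ev n → Ev m) (θ : CPWL m) (xb : Ev n) : Prop :=
  ∃ U ∈ 𝓝 xb, ∀ x ∈ U,
    ((φ₀ xb : ℝ) : EReal) + θ.eval (Φ xb) ≤ ((φ₀ x : ℝ) : EReal) + θ.eval (Φ x)

end Composite

section Calmness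

variable {n m : ℕ}

/-- Isolated calmness of a solution map at `((0,0), q0)`. -/
def IsolCalm (S : Ev n × Ev m → Set (Ev n × Ev m)) (q0 : Ev n × Ev m) : Prop :=
  ∃ c : ℝ, 0 ≤ c ∧ ∃ U ∈ 𝓝 (0 : Ev n × Ev m), ∃ V ∈ 𝓝 q0,
    ∀ p ∈ U, ∀ q ∈ S p ∩ V, ‖q - q0‖ ≤ c * (‖p.1‖ + ‖p.2‖)

/-- Robust isolated calmness of a solution map at `((0,0), q0)`. -/
def RobustIsolCalm (S : Ev n × Ev m → Set (Ev n × Ev m)) (q0 : Ev n × Ev m) : Prop :=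
  ∃ c : ℝ, 0 ≤ c ∧ ∃ U ∈ 𝓝 (0 : Ev n × Ev m), ∃ V ∈ 𝓝 q0,
    (∀ p ∈ U, ∀ q ∈ S p ∩ V, ‖q - q0‖ ≤ c * (‖p.1‖ + ‖p.2‖)) ∧
    (∀ p ∈ U, (S p ∩ V).Nonempty)

/-- The Lipschitz-like (Aubin) property of a solution map around `((0,0), q0)`. -/
def LipschitzLike (S : Ev n × Ev m → Set (Ev n × Ev m)) (q0 : Ev n × Ev m) : Prop :=
  ∃ c : ℝ, 0 ≤ c ∧ ∃ U ∈ 𝓝 (0 : Ev n × Ev m), ∃ V ∈ 𝓝 q0,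
    ∀ p ∈ U, ∀ p' ∈ U, ∀ q ∈ S p ∩ V, ∃ q' ∈ S p', ‖q - q'‖ ≤ c * ‖p - p'‖

end Calmness

/-!
Since `θ` is polyhedral, the critical cone `K := 𝒦(z̄, v̄)` is the polar of a finite set `G`
(the active `d i` and the active `a i - v̄`). The Hessian `H := ∇²ₓₓL(x̄, v̄)` is symmetric, so
`ū`, a zero of the quadratic form `u ↦ ⟨H u, u⟩`, which is nonnegative on the convex cone
`∇Φ(x̄)⁻¹ K`, satisfies the first-order condition `⟨H ū, u⟩ ≥ 0` on that cone. By Farkas'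
lemma `-H ū = ∇Φ(x̄)* η` for some `η` in the cone generated by `G`, and this `η` is the
required dual element.

Symmetry of `H` needs care, since `L` need not be differentiable near `x̄`. But `L` is
differentiable wherever `∇L ≠ 0` (Mathlib's `gradient` is `0` where `L` is not differentiable),
and as `∇L y ≈ ∇L x̄ + H (y - x̄)` this happens on the interior of a convex set containing `x̄`: a
ball if `∇L x̄ ≠ 0`, otherwise a truncated cone on which `H (y - x̄)` is large. The symmetry
theorem for second derivatives within such sets then applies.
-/

section ConeClosed

variable {E : Type*} [NormedAddCommGroup E] [NormedSpace ℝ E]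

theorem isClosed_hull_of_linearIndepOn {s : Finset E} (hs : LinearIndepOn ℝ id (s : Set E)) :
    IsClosed (PointedCone.hull ℝ (s : Set E) : Set E) := by
  set T := Fintype.linearCombination ℝ (fun a : s => (a : E))
  have hT : IsClosedEmbedding T := LinearMap.isClosedEmbedding_of_injective
    (LinearMap.ker_eq_bot.2 (LinearIndependent.fintypeLinearCombination_injective hs))
  have himage : (PointedCone.hull ℝ (s : Set E) : Set E) = T '' {c | 0 ≤ c} := by
    ext y
    simp only [SetLike.mem_coe, Submodule.mem_span_finset', Set.mem_image, Set.mem_ofPred_eq, T,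
      Fintype.linearCombination_apply]
    constructor
    · rintro ⟨f, rfl⟩
      exact ⟨fun a => f a, fun a => (f a).2, rfl⟩
    · rintro ⟨c, hc, rfl⟩
      exact ⟨fun a => ⟨c a, hc a⟩, rfl⟩
  rw [himage]
  exact hT.isClosedMap _ (isClosed_le continuous_const continuous_id)

/-- Carathéodory's argument: move along a linear relation among the vectors until a coefficient
vanishes. -/
theorem exists_mem_hull_erase_of_not_linearIndepOn [DecidableEq E] {s : Finset E}
    (hs : ¬LinearIndepOn ℝ id (s : Set E)) {y : E} (hy : y ∈ PointedCone.hull ℝ (s : Set E)) :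
    ∃ x ∈ s, y ∈ PointedCone.hull ℝ ((s.erase x : Finset E) : Set E) := by
  obtain ⟨g, hg, hpos⟩ : ∃ g : E → ℝ, ∑ a ∈ s, g a • a = 0 ∧ ∃ i ∈ s, 0 < g i := by
    obtain ⟨g, hg, i, hi, hgi⟩ := not_linearIndepOn_finset_iff.1 hs
    rcases hgi.lt_or_gt with hneg | hpos
    · refine ⟨-g, ?_, i, hi, by simpa using hneg⟩
      simpa [neg_smul, Finset.sum_neg_distrib] using hg
    · exact ⟨g, hg, i, hi, hpos⟩
  obtain ⟨f, -, rfl⟩ := Submodule.mem_span_finset.1 hy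
  obtain ⟨x, hx, hxmin⟩ := (s.filter (0 < g ·)).exists_min_image (fun a => f a / g a)
    (by simpa [Finset.Nonempty] using hpos)
  rw [Finset.mem_filter] at hx
  set t := (f x : ℝ) / g x
  have ht : 0 ≤ t := div_nonneg (f x).2 hx.2.le
  have hcoef : ∀ a ∈ s, 0 ≤ (f a : ℝ) - t * g a := by
    intro a ha
    rcases le_or_gt (g a) 0 with hga | hga
    · nlinarith [(f a).2]
    · have := hxmin a (Finset.mem_filter.2 ⟨ha, hga⟩)
      rw [le_div_iff₀ hga] at this
      linarith
  have hsum : ∑ a ∈ s, f a • a = ∑ a ∈ s.erase x, ((f a : ℝ) - t * g a) • a := by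
    rw [Finset.sum_erase _ (by simp [t, div_mul_cancel₀ _ hx.2.ne'])]
    simp only [sub_smul, Finset.sum_sub_distrib, mul_smul, ← Finset.smul_sum, hg, smul_zero,
      sub_zero]
    rfl
  refine ⟨x, hx.1, hsum ▸ Submodule.sum_mem _ fun a ha => ?_⟩
  exact PointedCone.smul_mem _ (hcoef a (Finset.mem_of_mem_erase ha))
    (Submodule.subset_span ha)

theorem isClosed_hull_finset (s : Finset E) :
    IsClosed (PointedCone.hull ℝ (s : Set E) : Set E) := by
  classical
  induction s using Finset.strongInduction with
  | H s ih =>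
    by_cases hs : LinearIndepOn ℝ id (s : Set E)
    · exact isClosed_hull_of_linearIndepOn hs
    have : (PointedCone.hull ℝ (s : Set E) : Set E) =
        ⋃ x ∈ s, (PointedCone.hull ℝ ((s.erase x : Finset E) : Set E) : Set E) := by
      refine subset_antisymm (fun y hy => ?_) (Set.iUnion₂_subset fun x _ => ?_)
      · obtain ⟨x, hx, hy⟩ := exists_mem_hull_erase_of_not_linearIndepOn hs hy
        exact Set.mem_biUnion hx hy
      · exact Submodule.span_mono (Finset.coe_subset.2 (Finset.erase_subset x s))
    rw [this]
    exact isClosed_biUnion_finset fun x hx => ih _ (Finset.erase_ssubset hx)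

end ConeClosed

section Farkas

variable {E : Type*} [NormedAddCommGroup E] [InnerProductSpace ℝ E]

theorem inner_nonpos_of_mem_hull {G : Set E} {η w : E} (hη : η ∈ PointedCone.hull ℝ G)
    (hw : ∀ g ∈ G, ⟪g, w⟫ ≤ 0) : ⟪η, w⟫ ≤ 0 := by
  induction hη using Submodule.span_induction with
  | mem g hg => exact hw g hg
  | zero => simp
  | add x y _ _ hx hy => rw [inner_add_left]; linarith
  | smul c x _ hx =>
    rw [← Nonneg.coe_smul, real_inner_smul_left]
    exact mul_nonpos_of_nonneg_of_nonpos c.2 hx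

variable [CompleteSpace E]

theorem mem_hull_of_forall_inner_nonpos {G : Set E} (hG : G.Finite) {b : E}
    (h : ∀ u, (∀ g ∈ G, ⟪g, u⟫ ≤ 0) → ⟪b, u⟫ ≤ 0) : b ∈ PointedCone.hull ℝ G := by
  let C : ProperCone ℝ E :=
    ⟨PointedCone.hull ℝ G, by simpa using isClosed_hull_finset hG.toFinset⟩
  by_contra hb
  obtain ⟨y, hCy, hby⟩ := C.hyperplane_separation' (x₀ := b) hb
  have := h (-y) fun g hg => by
    simpa [inner_neg_right] using hCy g (Submodule.subset_span hg)
  rw [inner_neg_right] at this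
  linarith

theorem exists_mem_hull_adjoint_eq {F : Type*} [NormedAddCommGroup F] [InnerProductSpace ℝ F]
    [CompleteSpace F] (A : E →L[ℝ] F) {G : Set F} (hG : G.Finite) {b : E}
    (h : ∀ u, (∀ g ∈ G, ⟪g, A u⟫ ≤ 0) → ⟪b, u⟫ ≤ 0) :
    ∃ η ∈ PointedCone.hull ℝ G, A.adjoint η = b := by
  have hb : b ∈ PointedCone.hull ℝ (A.adjoint '' G) :=
    mem_hull_of_forall_inner_nonpos (hG.image _) fun u hu => h u fun g hg => by
      simpa [ContinuousLinearMap.adjoint_inner_left] using hu _ (Set.mem_image_of_mem _ hg)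
  rw [PointedCone.hull, show (A.adjoint : F → E) =
      ((A.adjoint : F →ₗ[ℝ] E).restrictScalars {c : ℝ // 0 ≤ c}) from rfl,
    Submodule.span_image] at hb
  exact Submodule.mem_map.1 hb

end Farkas

section HessianSymm

variable {E : Type*} [NormedAddCommGroup E] [InnerProductSpace ℝ E]

def circularCone (x q : E) (κ : ℝ) : Set E := {y | κ * ‖y - x‖ ≤ ⟪q, y - x⟫}

theorem convex_circularCone (x q : E) {κ : ℝ} (hκ : 0 ≤ κ) : Convex ℝ (circularCone x q κ) := by
  intro y hy z hz a b ha hb hab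
  have hsub : a • y + b • z - x = a • (y - x) + b • (z - x) := by
    linear_combination (norm := module) hab • x
  simp only [circularCone, Set.mem_ofPred_eq, hsub, inner_add_right, real_inner_smul_right]
    at hy hz ⊢
  calc κ * ‖a • (y - x) + b • (z - x)‖ ≤ κ * (a * ‖y - x‖ + b * ‖z - x‖) := by
        gcongr
        refine (norm_add_le _ _).trans_eq ?_
        rw [norm_smul_of_nonneg ha, norm_smul_of_nonneg hb]
    _ ≤ a * ⟪q, y - x⟫ + b * ⟪q, z - x⟫ := by nlinarith

theorem apex_notMem_interior_circularCone (x : E) {q : E} (hq : q ≠ 0) {κ : ℝ} (hκ : 0 ≤ κ) :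
    x ∉ interior (circularCone x q κ) := by
  intro hx
  have hlim : Tendsto (fun t : ℝ => x - t • q) (𝓝[>] 0) (𝓝 x) := by
    have hc : Continuous fun t : ℝ => x - t • q := by fun_prop
    exact tendsto_nhdsWithin_of_tendsto_nhds (hc.tendsto' 0 x (by simp))
  obtain ⟨t, hts, ht⟩ := ((hlim.eventually (mem_interior_iff_mem_nhds.1 hx)).and
    self_mem_nhdsWithin).exists
  simp only [sub_sub_cancel_left, inner_neg_right, real_inner_smul_right,
    real_inner_self_eq_norm_sq] at hts
  have : 0 < t * ‖q‖ ^ 2 := by have := norm_pos_iff.2 hq; positivity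
  linarith [mul_nonneg hκ (norm_nonneg (-(t • q)))]

theorem nonempty_interior_ball_inter_circularCone (x q : E) {κ δ : ℝ} (hκ : 0 ≤ κ)
    (hκq : κ < ‖q‖) (hδ : 0 < δ) :
    (interior (Metric.ball x δ ∩ circularCone x q κ)).Nonempty := by
  have hqpos : 0 < ‖q‖ := hκ.trans_lt hκq
  set c := δ / (2 * ‖q‖)
  have hc : 0 < c := by positivity
  have hopen : IsOpen (Metric.ball x δ ∩ {y | κ * ‖y - x‖ < ⟪q, y - x⟫}) :=
    Metric.isOpen_ball.inter (isOpen_lt (by fun_prop) (by fun_prop))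
  have hsub : Metric.ball x δ ∩ {y | κ * ‖y - x‖ < ⟪q, y - x⟫} ⊆
      Metric.ball x δ ∩ circularCone x q κ :=
    Set.inter_subset_inter_right _ (Set.ofPred_subset_ofPred.2 fun _ hy => hy.le)
  refine ⟨x + c • q, interior_maximal hsub hopen ⟨?_, ?_⟩⟩
  · rw [Metric.mem_ball, dist_eq_norm, add_sub_cancel_left, norm_smul_of_nonneg hc.le,
      div_mul_eq_mul_div, mul_div_mul_right _ _ hqpos.ne']
    linarith
  · rw [Set.mem_ofPred_eq, add_sub_cancel_left, norm_smul_of_nonneg hc.le,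
      real_inner_smul_right, real_inner_self_eq_norm_sq]
    nlinarith [mul_pos hc hqpos]

variable [CompleteSpace E] {L : E → ℝ} {x : E}

theorem differentiableAt_of_gradient_ne_zero {y : E} (h : gradient L y ≠ 0) :
    DifferentiableAt ℝ L y := by
  by_contra hL
  exact h (gradient_eq_zero_of_not_differentiableAt hL)

/-- The set is the circular cone of axis `q := H* H e`, cut off near `x`: on it `‖H (y - x)‖`
dominates `‖y - x‖`, hence also the remainder `∇L y - H (y - x)`. -/
theorem exists_cone_gradient_ne_zero (hg : DifferentiableAt ℝ (gradient L) x)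
    (hx : gradient L x = 0) (hH : fderiv ℝ (gradient L) x ≠ 0) :
    ∃ s : Set E, Convex ℝ s ∧ (interior s).Nonempty ∧ x ∈ s ∧
      ∀ y ∈ interior s, gradient L y ≠ 0 := by
  set H := fderiv ℝ (gradient L) x
  obtain ⟨e, he⟩ : ∃ e, H e ≠ 0 := by
    by_contra! h
    exact hH (ContinuousLinearMap.ext h)
  set q := H.adjoint (H e)
  have hq : ∀ u, ⟪q, u⟫ = ⟪H e, H u⟫ := fun u => H.adjoint_inner_left u (H e)
  have hHe : 0 < ‖H e‖ := norm_pos_iff.2 he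
  have hqpos : 0 < ‖q‖ := by
    refine norm_pos_iff.2 fun h0 => he ?_
    simpa [h0] using (hq e).symm
  set κ := ‖q‖ / 2
  have hκ : 0 < κ := by positivity
  obtain ⟨δ, hδ, hclose⟩ := Metric.eventually_nhds_iff.1
    (Asymptotics.isLittleO_iff.1 hg.hasFDerivAt.isLittleO (c := κ / (2 * ‖H e‖)) (by positivity))
  refine ⟨Metric.ball x δ ∩ circularCone x q κ,
    (convex_ball x δ).inter (convex_circularCone x q hκ.le),
    nonempty_interior_ball_inter_circularCone x q hκ.le (half_lt_self hqpos) hδ,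
    ⟨Metric.mem_ball_self hδ, by simp [circularCone]⟩, fun y hy hy0 => ?_⟩
  have hyx : y ≠ x := by
    rintro rfl
    exact apex_notMem_interior_circularCone y (norm_pos_iff.1 hqpos) hκ.le
      (interior_mono Set.inter_subset_right hy)
  have hys := interior_subset hy
  have hnear := hclose (y := y) hys.1
  rw [hy0, hx, sub_zero, zero_sub, norm_neg] at hnear
  have hpos : 0 < ‖y - x‖ := norm_pos_iff.2 (sub_ne_zero.2 hyx)
  have hcone : κ * ‖y - x‖ ≤ ‖H e‖ * ‖H (y - x)‖ :=
    (show κ * ‖y - x‖ ≤ ⟪q, y - x⟫ from hys.2).trans ((hq _).trans_le (real_inner_le_norm _ _))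
  have : ‖H e‖ * ‖H (y - x)‖ ≤ κ / 2 * ‖y - x‖ := by
    calc ‖H e‖ * ‖H (y - x)‖ ≤ ‖H e‖ * (κ / (2 * ‖H e‖) * ‖y - x‖) := by gcongr
      _ = κ / 2 * ‖y - x‖ := by field_simp
  nlinarith

theorem exists_convex_gradient_ne_zero (hg : DifferentiableAt ℝ (gradient L) x)
    (hH : fderiv ℝ (gradient L) x ≠ 0) :
    ∃ s : Set E, Convex ℝ s ∧ (interior s).Nonempty ∧ x ∈ s ∧
      ∀ y ∈ interior s, gradient L y ≠ 0 := by
  by_cases hx : gradient L x = 0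
  · exact exists_cone_gradient_ne_zero hg hx hH
  obtain ⟨r, hr, hball⟩ := Metric.eventually_nhds_iff_ball.1 (hg.continuousAt.eventually_ne hx)
  refine ⟨Metric.ball x r, convex_ball x r, ?_, Metric.mem_ball_self hr,
    fun y hy => hball y (interior_subset hy)⟩
  rw [Metric.isOpen_ball.interior_eq]
  exact ⟨x, Metric.mem_ball_self hr⟩

theorem inner_fderiv_gradient_comm (hg : DifferentiableAt ℝ (gradient L) x) (v w : E) :
    ⟪fderiv ℝ (gradient L) x v, w⟫ = ⟪fderiv ℝ (gradient L) x w, v⟫ := by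
  set H := fderiv ℝ (gradient L) x
  by_cases hH : H = 0
  · simp [hH]
  obtain ⟨s, hconv, hne, hxs, hgrad⟩ := exists_convex_gradient_ne_zero hg hH
  let D : E →L[ℝ] StrongDual ℝ E := innerSL ℝ
  have hL : ∀ y ∈ interior s, HasFDerivAt L (D (gradient L y)) y := fun y hy =>
    hasGradientAt_iff_hasFDerivAt.1
      (differentiableAt_of_gradient_ne_zero (hgrad y hy)).hasGradientAt
  have hD : HasFDerivWithinAt (fun y => D (gradient L y)) (D.comp H) (interior s) x :=
    (D.hasFDerivAt.comp x hg.hasFDerivAt).hasFDerivWithinAt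
  exact hconv.second_derivative_within_at_symmetric hne hL hxs hD v w

end HessianSymm

theorem inner_apply_nonneg_of_quadratic_nonneg_on_ray {E : Type*} [NormedAddCommGroup E]
    [InnerProductSpace ℝ E] (H : E →L[ℝ] E) (hH : ∀ u v, ⟪H u, v⟫ = ⟪H v, u⟫) {u₀ u : E}
    (hu₀ : ⟪H u₀, u₀⟫ = 0) (h : ∀ t : ℝ, 0 < t → 0 ≤ ⟪H (u₀ + t • u), u₀ + t • u⟫) :
    0 ≤ ⟪H u₀, u⟫ := by
  have hslope : ∀ t ∈ Set.Ioi (0 : ℝ), 0 ≤ 2 * ⟪H u₀, u⟫ + t * ⟪H u, u⟫ := fun t ht => by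
    have := h t ht
    simp only [map_add, map_smul, inner_add_left, inner_add_right, real_inner_smul_left,
      real_inner_smul_right, hu₀, hH u u₀] at this
    have : 0 ≤ t * (2 * ⟪H u₀, u⟫ + t * ⟪H u, u⟫) := by linear_combination this
    exact (mul_nonneg_iff_of_pos_left ht).1 this
  have hc : Continuous fun t : ℝ => 2 * ⟪H u₀, u⟫ + t * ⟪H u, u⟫ := by fun_prop
  have := ge_of_tendsto
    (tendsto_nhdsWithin_of_tendsto_nhds (hc.tendsto' 0 (2 * ⟪H u₀, u⟫) (by simp)))
    (eventually_nhdsWithin_of_forall hslope)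
  linarith

theorem eventually_add_mul_nonpos {α β : ℝ} (hα : α ≤ 0) (hβ : α = 0 → β ≤ 0) :
    ∀ᶠ t in 𝓝[>] (0 : ℝ), α + t * β ≤ 0 := by
  rcases hα.lt_or_eq with hlt | rfl
  · have hc : Continuous fun t : ℝ => α + t * β := by fun_prop
    exact tendsto_nhdsWithin_of_tendsto_nhds (hc.tendsto' 0 α (by simp))
      |>.eventually (Iic_mem_nhds hlt)
  · filter_upwards [self_mem_nhdsWithin] with t ht
    simpa using mul_nonpos_of_nonneg_of_nonpos (le_of_lt ht) (hβ rfl)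

theorem mem_tcone_of_eventually {E : Type*} [NormedAddCommGroup E] [NormedSpace ℝ E]
    {s : Set E} {x w : E} (h : ∀ᶠ t in 𝓝[>] (0 : ℝ), x + t • w ∈ s) : w ∈ tcone s x := by
  obtain ⟨t₀, ht₀, hs⟩ := (nhdsGT_basis (0 : ℝ)).eventually_iff.1 h
  set τ : ℕ → ℝ := fun k => t₀ / ((k : ℝ) + 2)
  have hτ : ∀ k, 0 < τ k := fun k => by positivity
  refine ⟨fun k => x + τ k • w, fun k => (τ k)⁻¹, fun k => hs ⟨hτ k, ?_⟩,
    fun k => inv_nonneg.2 (hτ k).le, ?_, ?_⟩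
  · exact div_lt_self ht₀ (by linarith [k.cast_nonneg (α := ℝ)])
  · have : Tendsto τ atTop (𝓝 0) :=
      tendsto_const_nhds.div_atTop (tendsto_atTop_add_const_right _ 2 tendsto_natCast_atTop_atTop)
    simpa using tendsto_const_nhds.add (this.smul_const w)
  · simp [smul_smul, inv_mul_cancel₀ (hτ _).ne']

theorem inner_nonpos_of_mem_tcone {E : Type*} [NormedAddCommGroup E] [InnerProductSpace ℝ E]
    {s : Set E} {x w d : E} {β : ℝ} (hs : ∀ z ∈ s, ⟪d, z⟫ ≤ β) (hx : ⟪d, x⟫ = β)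
    (hw : w ∈ tcone s x) : ⟪d, w⟫ ≤ 0 := by
  obtain ⟨z, c, hzs, hc, -, hlim⟩ := hw
  refine le_of_tendsto ((tendsto_const_nhds (x := d)).inner hlim) (Eventually.of_forall fun k => ?_)
  rw [real_inner_smul_right, inner_sub_right, hx]
  exact mul_nonpos_of_nonneg_of_nonpos (hc k) (by linarith [hs _ (hzs k)])

namespace CPWL

variable {m : ℕ} (θ : CPWL m)

instance : Nonempty (Fin θ.l) := ⟨⟨0, θ.hl⟩⟩

theorem le_val (z : Ev m) (i : Fin θ.l) : ⟪θ.a i, z⟫ - θ.al i ≤ θ.val z :=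
  le_ciSup (f := fun i => ⟪θ.a i, z⟫ - θ.al i) (Set.finite_range _).bddAbove i

theorem val_le {z : Ev m} {r : ℝ} (h : ∀ i, ⟪θ.a i, z⟫ - θ.al i ≤ r) : θ.val z ≤ r :=
  ciSup_le h

variable {θ} {zb vb w : Ev m}

theorem inner_d_nonpos_of_mem_crit (hw : w ∈ θ.crit zb vb) {i : Fin θ.p} (hi : i ∈ θ.Iact zb) :
    ⟪θ.d i, w⟫ ≤ 0 :=
  inner_nonpos_of_mem_tcone (fun _ (hz : _ ∈ θ.dom) => hz i) hi hw.1

theorem inner_a_le_of_mem_crit (hw : w ∈ θ.crit zb vb) {i : Fin θ.l} (hi : i ∈ θ.Kact zb) :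
    ⟪θ.a i, w⟫ ≤ ⟪vb, w⟫ := by
  refine ge_of_tendsto hw.2 (eventually_nhdsWithin_of_forall fun t (ht : 0 < t) => ?_)
  rw [le_div_iff₀ ht]
  have := θ.le_val (zb + t • w) i
  rw [inner_add_right, real_inner_smul_right] at this
  have hi : θ.val zb = ⟪θ.a i, zb⟫ - θ.al i := hi
  linarith

theorem eventually_add_smul_mem_dom (hzb : zb ∈ θ.dom)
    (hw : ∀ i ∈ θ.Iact zb, ⟪θ.d i, w⟫ ≤ 0) :
    ∀ᶠ t in 𝓝[>] (0 : ℝ), zb + t • w ∈ θ.dom := by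
  refine (Filter.eventually_all.2 fun i =>
    eventually_add_mul_nonpos (sub_nonpos.2 (hzb i)) fun h => hw i (sub_eq_zero.1 h)).mono
    fun t ht i => ?_
  have := ht i
  rw [inner_add_right, real_inner_smul_right]
  linarith

theorem eventually_val_add_smul_le (hw : ∀ i ∈ θ.Kact zb, ⟪θ.a i, w⟫ ≤ ⟪vb, w⟫) :
    ∀ᶠ t in 𝓝[>] (0 : ℝ), θ.val (zb + t • w) ≤ θ.val zb + t * ⟪vb, w⟫ := by
  refine (Filter.eventually_all.2 fun i =>
    eventually_add_mul_nonpos (α := ⟪θ.a i, zb⟫ - θ.al i - θ.val zb)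
      (β := ⟪θ.a i, w⟫ - ⟪vb, w⟫) (by linarith [θ.le_val zb i])
      fun h => sub_nonpos.2 (hw i (by linarith : θ.val zb = _))).mono
    fun t ht => θ.val_le fun i => ?_
  have := ht i
  rw [inner_add_right, real_inner_smul_right]
  linarith

theorem eventually_val_add_smul_eq (hvb : vb ∈ θ.subdiff zb)
    (hd : ∀ i ∈ θ.Iact zb, ⟪θ.d i, w⟫ ≤ 0) (ha : ∀ i ∈ θ.Kact zb, ⟪θ.a i, w⟫ ≤ ⟪vb, w⟫) :
    ∀ᶠ t in 𝓝[>] (0 : ℝ), zb + t • w ∈ θ.dom ∧ θ.val (zb + t • w) = θ.val zb + t * ⟪vb, w⟫ := by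
  filter_upwards [eventually_add_smul_mem_dom hvb.1 hd, eventually_val_add_smul_le ha]
    with t hdom hle
  refine ⟨hdom, le_antisymm hle ?_⟩
  have := hvb.2 _ hdom
  rw [add_sub_cancel_left, real_inner_smul_right] at this
  linarith

theorem mem_crit_iff (hvb : vb ∈ θ.subdiff zb) :
    w ∈ θ.crit zb vb ↔
      (∀ i ∈ θ.Iact zb, ⟪θ.d i, w⟫ ≤ 0) ∧ ∀ i ∈ θ.Kact zb, ⟪θ.a i, w⟫ ≤ ⟪vb, w⟫ := by
  refine ⟨fun hw => ⟨fun i => inner_d_nonpos_of_mem_crit hw, fun i => inner_a_le_of_mem_crit hw⟩,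
    fun ⟨hd, ha⟩ => ?_⟩
  have h := eventually_val_add_smul_eq hvb hd ha
  refine ⟨mem_tcone_of_eventually (h.mono fun t ht => ht.1), tendsto_const_nhds.congr' ?_⟩
  filter_upwards [h, self_mem_nhdsWithin] with t ht (htpos : 0 < t)
  rw [ht.2, add_sub_cancel_left, mul_div_cancel_left₀ _ htpos.ne']

variable (θ zb vb) in
/-- Generators of the polar of the critical cone, see `mem_crit_iff_forall_inner_nonpos`. -/
def critGenerators : Set (Ev m) :=
  θ.d '' θ.Iact zb ∪ (fun i => θ.a i - vb) '' θ.Kact zb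

theorem critGenerators_finite : (θ.critGenerators zb vb).Finite :=
  (Set.toFinite _).union (Set.toFinite _)

theorem mem_crit_iff_forall_inner_nonpos (hvb : vb ∈ θ.subdiff zb) :
    w ∈ θ.crit zb vb ↔ ∀ g ∈ θ.critGenerators zb vb, ⟪g, w⟫ ≤ 0 := by
  simp only [mem_crit_iff hvb, critGenerators, Set.mem_union, or_imp, forall_and,
    Set.forall_mem_image, inner_sub_left, sub_nonpos]

end CPWL

theorem stmt17_general {n m : ℕ} (θ : CPWL m) (φ₀ : Ev n → ℝ) (Φ : Ev n → Ev m)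
    (xb : Ev n) (vb : Ev m)
    (hgrad : DifferentiableAt ℝ (gradL φ₀ Φ vb) xb)
    (hvb : vb ∈ θ.subdiff (Φ xb))
    (hpos : ∀ u : Ev n, fderiv ℝ Φ xb u ∈ θ.crit (Φ xb) vb →
      0 ≤ ⟪HessOp φ₀ Φ vb xb u, u⟫)
    (ub : Ev n) (hub1 : fderiv ℝ Φ xb ub ∈ θ.crit (Φ xb) vb)
    (hub2 : ⟪HessOp φ₀ Φ vb xb ub, ub⟫ = 0) :
    ∃ η : Ev m, (∀ w ∈ θ.crit (Φ xb) vb, ⟪η, w⟫ ≤ 0) ∧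
      ⟪η, fderiv ℝ Φ xb ub⟫ = 0 ∧
      HessOp φ₀ Φ vb xb ub + adjD Φ xb η = 0 := by
  set A := fderiv ℝ Φ xb
  set H := HessOp φ₀ Φ vb xb
  set G := θ.critGenerators (Φ xb) vb
  have hcrit : ∀ w, w ∈ θ.crit (Φ xb) vb ↔ ∀ g ∈ G, ⟪g, w⟫ ≤ 0 := fun w =>
    CPWL.mem_crit_iff_forall_inner_nonpos hvb
  have hfirst : ∀ u, (∀ g ∈ G, ⟪g, A u⟫ ≤ 0) → 0 ≤ ⟪H ub, u⟫ := fun u hu =>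
    inner_apply_nonneg_of_quadratic_nonneg_on_ray H (inner_fderiv_gradient_comm hgrad) hub2
      fun t ht => hpos _ <| (hcrit _).2 fun g hg => by
        rw [map_add, map_smul, inner_add_right, real_inner_smul_right]
        nlinarith [(hcrit _).1 hub1 g hg, hu g hg]
  obtain ⟨η, hηG, hη⟩ := exists_mem_hull_adjoint_eq A CPWL.critGenerators_finite (b := -H ub)
    fun u hu => by rw [inner_neg_left]; linarith [hfirst u hu]
  refine ⟨η, fun w hw => inner_nonpos_of_mem_hull hηG ((hcrit w).1 hw), ?_, ?_⟩
  · rw [← ContinuousLinearMap.adjoint_inner_left, hη, inner_neg_left, hub2, neg_zero]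
  · rw [adjD, hη, add_neg_cancel]

/-- existence of a dual element associated with a zero of the Hessian
quadratic form over critical directions. -/
theorem stmt17 {n m : ℕ} (θ : CPWL m) (φ₀ : Ev n → ℝ) (Φ : Ev n → Ev m)
    (xb : Ev n) (vb : Ev m)
    (hphi : DifferentiableAt ℝ φ₀ xb) (hPhi : DifferentiableAt ℝ Φ xb)
    (hgrad : DifferentiableAt ℝ (gradL φ₀ Φ vb) xb)
    (hvb : vb ∈ θ.subdiff (Φ xb))
    (hpos : ∀ u : Ev n, fderiv ℝ Φ xb u ∈ θ.crit (Φ xb) vb →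
      0 ≤ ⟪HessOp φ₀ Φ vb xb u, u⟫)
    (ub : Ev n) (hub1 : fderiv ℝ Φ xb ub ∈ θ.crit (Φ xb) vb)
    (hub2 : ⟪HessOp φ₀ Φ vb xb ub, ub⟫ = 0) :
    ∃ η : Ev m, (∀ w ∈ θ.crit (Φ xb) vb, ⟪η, w⟫ ≤ 0) ∧
      ⟪η, fderiv ℝ Φ xb ub⟫ = 0 ∧
      HessOp φ₀ Φ vb xb ub + adjD Φ xb η = 0 :=
  stmt17_general θ φ₀ Φ xb vb hgrad hvb hpos ub hub1 hub2
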